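/- Let n ≥ 1 and define P : ℝ → ℝ^{4n} → ℝ³ → ℂ by P t x z := ∫_{τ ∈ ℝ³} exp( -( i·⟨τ, z⟩ + (1/2)·‖τ‖·(cosh ‖τ‖ / sinh ‖τ‖)·‖x‖² ) / t ) · ( ‖τ‖ / sinh ‖τ‖ )^{2n} dτ. Let 0 < s < 1 and α, β, γ, δ ∈ {1,…,4n}, and assume that none of the pairings (α = β and γ = δ), (α = γ and β = δ), (α = δ and β = γ) holds. Then ∫_{(x,z) ∈ ℝ^{4n} × ℝ³} P (1-s) x z · x_α · x_β · (∂_{x_γ}∂_{x_δ} P) s x z d(x,z) = 0, where ∂_{x_γ}∂_{x_δ}P s x z denotes the second-order partial derivative of the map x ↦ P s x z in the γ-th and δ-th coordinate directions, x_α is the α-th coordinate of x, and the integral is over ℝ^{4n} × ℝ³ with Lebesgue measure. -/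

import Mathlib

/-! Reflecting one coordinate, `x_i ↦ -x_i`, preserves Lebesgue measure and the kernel, which
depends on `x` only through `‖x‖`. Under it the integrand gets a factor `-1` for each of
`α, β, γ, δ` equal to `i` (for the two partial derivatives by the chain rule). If the four
indices are not matched in pairs, some `i` occurs an odd number of times among them, so the
integrand is odd and its integral vanishes; no integrability is needed, since the change of
variables holds for the Bochner integral of any function. -/

open RealInnerProductSpace MeasureTheory

/-- The Beals–Gaveau–Greiner heat kernel (unnormalized) of the intrinsic sublaplacian on
the quaternionic Heisenberg group. -/
noncomputable def bggKernel (n : ℕ) (t : ℝ) (x : EuclideanSpace ℝ (Fin (4 * n)))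
    (z : EuclideanSpace ℝ (Fin 3)) : ℂ :=
  ∫ τ : EuclideanSpace ℝ (Fin 3),
    Complex.exp (-((Complex.I * ((⟪τ, z⟫ : ℝ) : ℂ) +
        (((1 / 2 : ℝ) * ‖τ‖ * (Real.cosh ‖τ‖ / Real.sinh ‖τ‖) * ‖x‖ ^ 2 : ℝ) : ℂ)) /
        (t : ℂ))) *
      (((‖τ‖ / Real.sinh ‖τ‖ : ℝ) : ℂ)) ^ (2 * n)

theorem fderiv_apply_map_of_comp_eq_smul {𝕜 E F : Type*} [NontriviallyNormedField 𝕜]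
    [NormedAddCommGroup E] [NormedSpace 𝕜 E] [NormedAddCommGroup F] [NormedSpace 𝕜 F]
    (e : E ≃L[𝕜] E) {f : E → F} {c : 𝕜} (hf : ∀ y, f (e y) = c • f y) (x v : E) :
    fderiv 𝕜 f (e x) (e v) = c • fderiv 𝕜 f x v := by
  have hfe : f ∘ e = c • f := funext hf
  have := e.comp_right_fderiv (f := f) (x := x)
  rw [hfe, fderiv_const_smul_field] at this
  exact (DFunLike.congr_fun this v).symm

theorem MeasureTheory.integral_eq_zero_of_comp_eq_neg {α G : Type*} [MeasurableSpace α]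
    {μ : Measure α} [NormedAddCommGroup G] [NormedSpace ℝ G] (T : α ≃ᵐ α)
    (hT : MeasurePreserving T μ μ) {f : α → G} (hf : ∀ p, f (T p) = -f p) :
    ∫ p, f p ∂μ = 0 := by
  have h := hT.integral_comp' f
  simp only [hf, integral_neg] at h
  have h2 : (2 : ℝ) • ∫ p, f p ∂μ = 0 := by
    rw [two_smul]
    nth_rw 1 [← h]
    exact neg_add_cancel _
  exact (smul_eq_zero.mp h2).resolve_left two_ne_zero

section ReflSign

variable {ι : Type*} [DecidableEq ι]

def reflSign (i a : ι) : ℝ := if a = i then -1 else 1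

theorem reflSign_mul_self (i a : ι) : reflSign i a * reflSign i a = 1 := by
  unfold reflSign; split_ifs <;> norm_num

theorem exists_reflSign_mul_eq_neg_one {α β γ δ : ι}
    (hpair : ¬((α = β ∧ γ = δ) ∨ (α = γ ∧ β = δ) ∨ (α = δ ∧ β = γ))) :
    ∃ i, reflSign i α * reflSign i β * reflSign i γ * reflSign i δ = -1 := by
  by_contra! h
  have := h α; have := h β; have := h γ; have := h δ
  simp only [reflSign] at *
  grind

end ReflSign

namespace EuclideanSpace

variable {ι : Type*} [Fintype ι] [DecidableEq ι]

noncomputable def coordReflection (i : ι) : EuclideanSpace ℝ ι ≃ₗᵢ[ℝ] EuclideanSpace ℝ ι :=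
  LinearIsometryEquiv.piLpCongrRight 2
    (fun a => if a = i then LinearIsometryEquiv.neg ℝ else LinearIsometryEquiv.refl ℝ ℝ)

theorem coordReflection_apply (i : ι) (x : EuclideanSpace ℝ ι) (a : ι) :
    coordReflection i x a = reflSign i a * x a := by
  by_cases h : a = i <;> simp [coordReflection, reflSign, h]

theorem coordReflection_single (i a : ι) :
    coordReflection i (single a 1) = reflSign i a • single a (1 : ℝ) := by
  ext b
  by_cases h : b = a
  · subst h; simp [coordReflection_apply]
  · simp [coordReflection_apply, h]

theorem fderiv_coordReflection_single {F : Type*} [NormedAddCommGroup F] [NormedSpace ℝ F]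
    {f : EuclideanSpace ℝ ι → F} {i : ι} {c : ℝ} (hf : ∀ y, f (coordReflection i y) = c • f y)
    (x : EuclideanSpace ℝ ι) (a : ι) :
    fderiv ℝ f (coordReflection i x) (single a 1) =
      (reflSign i a * c) • fderiv ℝ f x (single a 1) := by
  have h := fderiv_apply_map_of_comp_eq_smul (coordReflection i).toContinuousLinearEquiv hf x
    (single a 1)
  simp only [LinearIsometryEquiv.coe_toContinuousLinearEquiv, coordReflection_single,
    map_smul] at h
  rw [mul_smul, ← h, smul_smul, reflSign_mul_self, one_smul]

theorem fderiv_fderiv_coordReflection_single {F : Type*} [NormedAddCommGroup F]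
    [NormedSpace ℝ F] {f : EuclideanSpace ℝ ι → F} {i : ι}
    (hf : ∀ y, f (coordReflection i y) = f y) (x : EuclideanSpace ℝ ι) (a b : ι) :
    fderiv ℝ (fun y => fderiv ℝ f y (single b 1)) (coordReflection i x) (single a 1) =
      (reflSign i a * reflSign i b) •
        fderiv ℝ (fun y => fderiv ℝ f y (single b 1)) x (single a 1) := by
  refine fderiv_coordReflection_single (fun y => ?_) x a
  simpa using fderiv_coordReflection_single (c := 1) (by simpa using hf) y b

end EuclideanSpace

theorem bggKernel_map_linearIsometryEquiv (n : ℕ) (t : ℝ)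
    (e : EuclideanSpace ℝ (Fin (4 * n)) ≃ₗᵢ[ℝ] EuclideanSpace ℝ (Fin (4 * n)))
    (x : EuclideanSpace ℝ (Fin (4 * n))) (z : EuclideanSpace ℝ (Fin 3)) :
    bggKernel n t (e x) z = bggKernel n t x z := by
  simp only [bggKernel, LinearIsometryEquiv.norm_map]

theorem integral_xx_dxdx_bggKernel_eq_zero_general
    (n : ℕ) (s : ℝ)
    (α β γ δ : Fin (4 * n))
    (hpair : ¬((α = β ∧ γ = δ) ∨ (α = γ ∧ β = δ) ∨ (α = δ ∧ β = γ))) :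
    ∫ p : EuclideanSpace ℝ (Fin (4 * n)) × EuclideanSpace ℝ (Fin 3),
      bggKernel n (1 - s) p.1 p.2 * (p.1 α : ℂ) * (p.1 β : ℂ) *
        fderiv ℝ (fun x => fderiv ℝ (fun x' => bggKernel n s x' p.2) x
            (EuclideanSpace.single δ 1)) p.1 (EuclideanSpace.single γ 1)
      = 0 := by
  obtain ⟨i, hsign⟩ := exists_reflSign_mul_eq_neg_one hpair
  let R := EuclideanSpace.coordReflection i
  refine integral_eq_zero_of_comp_eq_neg (R.toMeasurableEquiv.prodCongr (.refl _)) ?_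
    fun ⟨x, z⟩ => ?_
  · rw [Measure.volume_eq_prod]
    exact R.measurePreserving.prod (.id _)
  · rw [show R.toMeasurableEquiv.prodCongr (.refl _) (x, z) = (R x, z) from rfl,
      bggKernel_map_linearIsometryEquiv, EuclideanSpace.coordReflection_apply,
      EuclideanSpace.coordReflection_apply, EuclideanSpace.fderiv_fderiv_coordReflection_single
        (bggKernel_map_linearIsometryEquiv n s R · z), Complex.real_smul, neg_eq_neg_one_mul,
      ← Complex.ofReal_one, ← Complex.ofReal_neg, ← hsign]
    push_cast
    ring

/-- Formula (2) in the proof of Theorem 5.7: if the indices `α, β, γ, δ` are not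
pairwise matched, the moment integral
`∫ P(1-s, x, z) · x_α x_β · ∂_{x_γ}∂_{x_δ} P(s, x, z) d(x, z)` vanishes. -/
theorem integral_xx_dxdx_bggKernel_eq_zero
    (n : ℕ) (hn : 1 ≤ n) (s : ℝ) (hs0 : 0 < s) (hs1 : s < 1)
    (α β γ δ : Fin (4 * n))
    (hpair : ¬((α = β ∧ γ = δ) ∨ (α = γ ∧ β = δ) ∨ (α = δ ∧ β = γ))) :
    ∫ p : EuclideanSpace ℝ (Fin (4 * n)) × EuclideanSpace ℝ (Fin 3),
      bggKernel n (1 - s) p.1 p.2 * (p.1 α : ℂ) * (p.1 β : ℂ) *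
        fderiv ℝ (fun x => fderiv ℝ (fun x' => bggKernel n s x' p.2) x
            (EuclideanSpace.single δ 1)) p.1 (EuclideanSpace.single γ 1)
      = 0 :=
  integral_xx_dxdx_bggKernel_eq_zero_general n s α β γ δ hpair
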